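/- arXiv:2111.01117 — 2 statements merged into one kernel-verified Lean document; each statement's English description precedes it below -/
import Mathlib

section
/- Let k be a field and R a discrete valuation ring containing k, with residue field ℓ and fraction field K. If ℓ has finite transcendence degree over k, then trdeg_k ℓ < trdeg_k K. -/
open IsLocalRing

/-- The transcendence degree of a commutative ring `L` over a commutative ring `k`, relative to
the ring homomorphism `f : k →+* L`: the supremum of cardinalities of subsets of `L` that are
algebraically independent over `k`. -/
noncomputable def RingHom.trdeg {k L : Type*} [CommRing k] [CommRing L] (f : k →+* L) :
    Cardinal :=
  letI : Algebra k L := f.toAlgebra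
  ⨆ s : { s : Set L // AlgebraicIndependent k ((↑) : s → L) }, Cardinal.mk s.1

/-!
Lift a finite transcendence basis `x` of `ℓ` over `k` to a family `y` in `R`, and let `π` be a
nonzero element of the maximal ideal. Since `k[y]` maps injectively to `ℓ`, no nonzero element
of `k[y]` is divisible by `π`; so in a relation `∑ aᵢ πⁱ = 0` over `k[y]`, after cancelling a
power of `π`, the constant coefficient would be divisible by `π`, hence zero. Thus `π` is
transcendental over `k[y]`, and `y, π` is an algebraically independent family of
`trdeg_k ℓ + 1` elements of `R ⊆ K`.
-/

universe u

open Polynomial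

theorem Polynomial.dvd_trailingCoeff_of_eval_eq_zero {R : Type*} [CommRing R] [IsDomain R]
    {p : R[X]} {π : R} (hπ : π ≠ 0) (hp : p.eval π = 0) : π ∣ p.trailingCoeff := by
  set n := p.natTrailingDegree
  obtain ⟨q, hpq⟩ : X ^ n ∣ p := X_pow_dvd_iff.2 fun _ ↦ coeff_eq_zero_of_lt_natTrailingDegree
  have hq : q.eval π = 0 := by
    rw [hpq, eval_mul, eval_pow, eval_X] at hp
    exact (mul_eq_zero.1 hp).resolve_left (pow_ne_zero n hπ)
  have hcoeff : p.trailingCoeff = q.eval 0 := by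
    rw [← coeff_zero_eq_eval_zero, ← coeff_X_pow_mul q n 0, zero_add, ← hpq]
    rfl
  simpa [hcoeff, hq] using sub_dvd_eval_sub π 0 q

theorem transcendental_of_forall_dvd_algebraMap_eq_zero {A R : Type*} [CommRing A] [CommRing R]
    [IsDomain R] [Algebra A R] {π : R} (hπ : π ≠ 0)
    (h : ∀ a : A, π ∣ algebraMap A R a → a = 0) : Transcendental A π := by
  have hinj : Function.Injective (algebraMap A R) :=
    (injective_iff_map_eq_zero _).2 fun a ha ↦ h a (ha ▸ dvd_zero π)
  rintro ⟨p, hp0, hp⟩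
  set q := p.map (algebraMap A R)
  have hcoeff : q.trailingCoeff = algebraMap A R (p.coeff q.natTrailingDegree) := coeff_map _ _
  have hdvd : π ∣ q.trailingCoeff :=
    dvd_trailingCoeff_of_eval_eq_zero hπ (by rwa [eval_map_algebraMap])
  have hq : q.trailingCoeff = 0 := by
    rw [hcoeff, h (p.coeff q.natTrailingDegree) (hcoeff ▸ hdvd), map_zero]
  refine hp0 <| map_injective _ hinj ?_
  rw [Polynomial.map_zero]
  exact trailingCoeff_eq_zero.1 hq

theorem AlgebraicIndependent.option_elim_of_map_eq_zero {k R S ι : Type*} [CommRing k]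
    [CommRing R] [IsDomain R] [CommRing S] [Algebra k R] [Algebra k S] (φ : R →ₐ[k] S)
    {x : ι → R} (hx : AlgebraicIndependent k (φ ∘ x)) {π : R} (hπ : π ≠ 0) (hφπ : φ π = 0) :
    AlgebraicIndependent k fun o : Option ι ↦ o.elim π x := by
  refine ((hx.of_comp φ).option_iff_transcendental π).2 <|
    transcendental_of_forall_dvd_algebraMap_eq_zero hπ fun ⟨a, ha⟩ ⟨c, hc⟩ ↦ Subtype.ext ?_
  obtain ⟨Q, rfl⟩ := (Algebra.adjoin_range_eq_range_aeval k x ▸ ha :)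
  have hQ : MvPolynomial.aeval (fun i ↦ φ (x i)) Q = 0 := by
    rw [← MvPolynomial.comp_aeval_apply, show MvPolynomial.aeval x Q = π * c from hc, map_mul,
      hφπ, zero_mul]
  simp [algebraicIndependent_iff.1 hx Q hQ]

theorem trdeg_lt_of_surjective_of_ker_ne_bot {k : Type*} {R S : Type u} [Field k] [CommRing R]
    [IsDomain R] [CommRing S] [IsDomain S] [Algebra k R] [Algebra k S] (φ : R →ₐ[k] S)
    (hφ : Function.Surjective φ) (hker : RingHom.ker φ ≠ ⊥)
    (hfin : Algebra.trdeg k S < Cardinal.aleph0) : Algebra.trdeg k S < Algebra.trdeg k R := by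
  obtain ⟨ι, x, hx⟩ := exists_isTranscendenceBasis'.{u} k S
  choose y hy using fun i ↦ hφ (x i)
  obtain ⟨π, hπker, hπ⟩ := Submodule.exists_mem_ne_zero_of_ne_bot hker
  have hind : AlgebraicIndependent k fun o : Option ι ↦ o.elim π y :=
    .option_elim_of_map_eq_zero φ ((funext hy : φ ∘ y = x) ▸ hx.1) hπ hπker
  obtain ⟨n, hn⟩ := Cardinal.lt_aleph0.1 (hx.cardinalMk_eq_trdeg ▸ hfin)
  calc Algebra.trdeg k S = n := hx.cardinalMk_eq_trdeg.symm.trans hn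
    _ < n + 1 := by exact_mod_cast n.lt_succ_self
    _ = Cardinal.mk (Option ι) := by rw [Cardinal.mk_option, hn]
    _ ≤ Algebra.trdeg k R := hind.cardinalMk_le_trdeg

theorem RingHom.trdeg_algebraMap {k L : Type*} [CommRing k] [CommRing L] [Algebra k L] :
    (algebraMap k L).trdeg = Algebra.trdeg k L := by
  rw [RingHom.trdeg, Algebra.algebra_ext (algebraMap k L).toAlgebra ‹_› fun _ ↦ rfl]
  rfl

/-- Let `k` be a field and `R` a DVR containing `k`, with residue field `ℓ` and fraction field
`K`. If `trdeg_k ℓ` is finite, then `trdeg_k ℓ < trdeg_k K`. -/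
theorem trdeg_residueField_lt_trdeg_fractionRing
    (k : Type*) (R : Type*) [Field k] [CommRing R] [IsDomain R] [IsDiscreteValuationRing R]
    [Algebra k R]
    (hfin : RingHom.trdeg ((residue R).comp (algebraMap k R)) < Cardinal.aleph0) :
    RingHom.trdeg ((residue R).comp (algebraMap k R)) <
      RingHom.trdeg (algebraMap k (FractionRing R)) := by
  change (algebraMap k (ResidueField R)).trdeg < _ at hfin ⊢
  rw [RingHom.trdeg_algebraMap] at hfin ⊢
  have hker : RingHom.ker (IsScalarTower.toAlgHom k R (ResidueField R)) ≠ ⊥ :=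
    (ker_residue (R := R)).trans_ne (IsDiscreteValuationRing.not_a_field R)
  calc Algebra.trdeg k (ResidueField R) < Algebra.trdeg k R :=
        trdeg_lt_of_surjective_of_ker_ne_bot _ residue_surjective hker hfin
    _ ≤ Algebra.trdeg k (FractionRing R) :=
        trdeg_le_of_injective (IsScalarTower.toAlgHom k R (FractionRing R))
          (IsFractionRing.injective R (FractionRing R))
end

section
/- Let A ⊆ R be a weakly unramified inclusion of discrete valuation rings (a uniformizer of A is a uniformizer of R), with residue fields k ⊆ ℓ and fraction fields K ⊆ L. If elements u_1, ..., u_n of R have residues in ℓ that are algebraically independent over k, then u_1, ..., u_n are algebraically independent over K in L. -/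
/-!
Given a nonzero relation `q(u) = 0` over `A`, divide `q` by a coefficient of minimal valuation:
the quotient still kills `u` (as `R` is a domain and `f` is injective) and has a coefficient `1`,
so its reduction is a nonzero relation among the residues over `k`. Hence the `u i` are
independent over `A`, and then over `K`, which is algebraic over `A`.
-/

open IsLocalRing

/-- Algebraic independence of a family `v` in `L` over `k`, relative to a ring homomorphism
`f : k →+* L`. -/
def RingHom.AlgIndep {k L ι : Type*} [CommRing k] [CommRing L] (f : k →+* L) (v : ι → L) :
    Prop :=
  letI : Algebra k L := f.toAlgebra
  AlgebraicIndependent k v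

open MvPolynomial

lemma RingHom.algIndep_iff {k L ι : Type*} [CommRing k] [CommRing L] (f : k →+* L)
    (v : ι → L) :
    f.AlgIndep v ↔ ∀ p : MvPolynomial ι k, eval₂ f v p = 0 → p = 0 := by
  let : Algebra k L := f.toAlgebra
  rw [RingHom.AlgIndep, algebraicIndependent_iff]
  simp only [aeval_def, RingHom.algebraMap_toAlgebra]

lemma RingHom.AlgIndep.map {k R S ι : Type*} [CommRing k] [CommRing R] [CommRing S]
    {f : k →+* R} {v : ι → R} (h : f.AlgIndep v) (g : R →+* S) (hg : Function.Injective g) :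
    (g.comp f).AlgIndep (g ∘ v) := by
  rw [RingHom.algIndep_iff] at h ⊢
  intro p hp
  exact h p (hg (by rwa [map_zero, eval₂_comp_left]))

lemma RingHom.AlgIndep.of_comp_algebraMap {A K L ι : Type*} [CommRing A] [CommRing K]
    [NoZeroDivisors K] [CommRing L] [Algebra A K] [Algebra.IsAlgebraic A K] {φ : K →+* L}
    {v : ι → L} (h : (φ.comp (algebraMap A K)).AlgIndep v) : φ.AlgIndep v := by
  let : Algebra K L := φ.toAlgebra
  let : Algebra A L := (φ.comp (algebraMap A K)).toAlgebra
  have : IsScalarTower A K L := .of_algebraMap_eq fun _ => rfl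
  exact AlgebraicIndependent.extendScalars K (R := A) h

lemma MvPolynomial.exists_eq_C_mul_and_coeff_eq_one {A σ : Type*} [CommRing A] [IsDomain A]
    [IsDiscreteValuationRing A] (q : MvPolynomial σ A) (hq : q ≠ 0) :
    ∃ a ≠ 0, ∃ q', q = C a * q' ∧ ∃ s, q'.coeff s = 1 := by
  obtain ⟨s, hs, hmin⟩ := q.support.exists_min_image
    (fun t => IsDiscreteValuationRing.addVal A (q.coeff t)) (support_nonempty.mpr hq)
  have ha : q.coeff s ≠ 0 := mem_support_iff.mp hs
  obtain ⟨q', hq'⟩ : C (q.coeff s) ∣ q := by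
    refine (C_dvd_iff_dvd_coeff _ _).mpr fun t => ?_
    by_cases ht : t ∈ q.support
    · exact IsDiscreteValuationRing.addVal_le_iff_dvd.mp (hmin t ht)
    · rw [notMem_support_iff.mp ht]
      exact dvd_zero _
  refine ⟨q.coeff s, ha, q', hq', s, mul_left_cancel₀ ha ?_⟩
  rw [mul_one, ← coeff_C_mul, ← hq']

theorem RingHom.algIndep_of_algIndep_residue {A R ι : Type*} [CommRing A] [IsDomain A]
    [IsDiscreteValuationRing A] [CommRing R] [NoZeroDivisors R] [IsLocalRing R] (f : A →+* R)
    [IsLocalHom f] (hf : Function.Injective f) {u : ι → R}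
    (hu : (ResidueField.map f).AlgIndep (residue R ∘ u)) : f.AlgIndep u := by
  rw [RingHom.algIndep_iff] at hu ⊢
  intro q hq
  by_contra hq0
  obtain ⟨a, ha, q', rfl, s, hs⟩ := q.exists_eq_C_mul_and_coeff_eq_one hq0
  have hq' : eval₂ f u q' = 0 := by
    rw [eval₂_mul, eval₂_C] at hq
    exact (mul_eq_zero.mp hq).resolve_left ((map_ne_zero_iff f hf).mpr ha)
  have hres : q'.map (residue A) = 0 := hu _ <| by
    rw [eval₂_map, ResidueField.map_comp_residue, ← eval₂_comp_left, hq', map_zero]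
  have hcoeff := congrArg (coeff s) hres
  rw [coeff_map, hs, map_one, coeff_zero] at hcoeff
  exact one_ne_zero hcoeff

theorem algIndep_fractionField_of_algIndep_residueField_general
    (A : Type*) [CommRing A] [IsDomain A] [IsDiscreteValuationRing A]
    (R : Type*) [CommRing R] [IsDomain R] [IsDiscreteValuationRing R]
    (f : A →+* R) [IsLocalHom f] (hf : Function.Injective f)
    (n : ℕ) (u : Fin n → R)
    (hu : RingHom.AlgIndep (ResidueField.map f) fun i => residue R (u i)) :
    RingHom.AlgIndep (IsFractionRing.lift (K := FractionRing A) (L := FractionRing R)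
        (g := (algebraMap R (FractionRing R)).comp f)
        ((IsFractionRing.injective R (FractionRing R)).comp hf))
      (fun i => algebraMap R (FractionRing R) (u i)) := by
  have := IsLocalization.isAlgebraic (FractionRing A) (nonZeroDivisors A)
  refine RingHom.AlgIndep.of_comp_algebraMap (A := A) ?_
  convert (f.algIndep_of_algIndep_residue hf hu).map _
    (IsFractionRing.injective R (FractionRing R)) using 1
  exacts [IsLocalization.lift_comp _, rfl]

/-- Let `A ⊆ R` be a weakly unramified injective local inclusion of DVRs (a uniformizer `π` of
`A` maps to a uniformizer of `R`), with residue fields `k ⊆ ℓ` and fraction fields `K ⊆ L`. If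
`u₁, …, uₙ ∈ R` have residues in `ℓ` that are algebraically independent over `k`, then
`u₁, …, uₙ` are algebraically independent over `K` in `L`. -/
theorem algIndep_fractionField_of_algIndep_residueField
    (A : Type*) [CommRing A] [IsDomain A] [IsDiscreteValuationRing A]
    (R : Type*) [CommRing R] [IsDomain R] [IsDiscreteValuationRing R]
    (f : A →+* R) [IsLocalHom f] (hf : Function.Injective f)
    (π : A) (hπ : Ideal.span {π} = maximalIdeal A)
    (hram : Ideal.span {f π} = maximalIdeal R)
    (n : ℕ) (u : Fin n → R)
    (hu : RingHom.AlgIndep (ResidueField.map f) fun i => residue R (u i)) :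
    RingHom.AlgIndep (IsFractionRing.lift (K := FractionRing A) (L := FractionRing R)
        (g := (algebraMap R (FractionRing R)).comp f)
        ((IsFractionRing.injective R (FractionRing R)).comp hf))
      (fun i => algebraMap R (FractionRing R) (u i)) :=
  algIndep_fractionField_of_algIndep_residueField_general A R f hf n u hu
end
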